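/- For an Introduce bag (P,S,F) with child bag (P,S',F') where S'=S∖{z} and F'=F∪{z} for some z∈S, if a well-behaved signature σ for (P,S,F) is valid, then the (z→future)-restriction of σ is a valid signature for (P,S',F'). -/

import Mathlib

namespace TreeContainment

open scoped Classical

variable {V Λ : Type}

/-- A directed graph with an explicit vertex set. -/
structure DGraph (V : Type) where
  verts : Set V
  Arc : V → V → Prop
  arc_left : ∀ ⦃u v : V⦄, Arc u v → u ∈ verts
  arc_right : ∀ ⦃u v : V⦄, Arc u v → v ∈ verts

noncomputable def DGraph.inDeg (G : DGraph V) (v : V) : ℕ := {u : V | G.Arc u v}.ncard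
noncomputable def DGraph.outDeg (G : DGraph V) (v : V) : ℕ := {u : V | G.Arc v u}.ncard
def DGraph.Acyclic (G : DGraph V) : Prop := ∀ v : V, ¬ Relation.TransGen G.Arc v v

def IsSubgraph (H G : DGraph V) : Prop :=
  H.verts ⊆ G.verts ∧ ∀ ⦃u v⦄, H.Arc u v → G.Arc u v

/-- The consecutive pairs (arcs) of a list of vertices. -/
def listArcs (p : List V) : List (V × V) := p.zip p.tail

def IsArcOf (p : List V) (a b : V) : Prop := (a, b) ∈ listArcs p

lemma isArcOf_mem_left {p : List V} {a b : V} (h : IsArcOf p a b) : a ∈ p :=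
  (List.of_mem_zip h).1

lemma isArcOf_mem_right {p : List V} {a b : V} (h : IsArcOf p a b) : b ∈ p :=
  List.mem_of_mem_tail (List.of_mem_zip h).2

/-- `p` is a directed path from `u` to `v` with respect to the arc relation `A`. -/
def DipathFrom (A : V → V → Prop) (u v : V) (p : List V) : Prop :=
  p.Chain' A ∧ p.Nodup ∧ p.head? = some u ∧ p.getLast? = some v

/-- Rooted binary phylogenetic network. -/
def IsBinPhyloNet (N : DGraph V) : Prop :=
  N.Acyclic ∧ N.verts.Finite ∧ N.verts.Nonempty ∧
  (∃! ρ, ρ ∈ N.verts ∧ N.inDeg ρ = 0) ∧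
  ∀ v ∈ N.verts,
    (N.inDeg v = 0 ∧ N.outDeg v = 2) ∨ (N.inDeg v = 1 ∧ N.outDeg v = 0) ∨
    (N.inDeg v = 2 ∧ N.outDeg v = 1) ∨ (N.inDeg v = 1 ∧ N.outDeg v = 2)

/-- Rooted binary phylogenetic tree: a binary phylogenetic network without reticulations. -/
def IsBinPhyloTree (T : DGraph V) : Prop :=
  IsBinPhyloNet T ∧ ∀ v ∈ T.verts, T.inDeg v ≤ 1

def leaves (G : DGraph V) : Set V :=
  {v : V | v ∈ G.verts ∧ G.inDeg v = 1 ∧ G.outDeg v = 0}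

/-- Equally labelled leaves of `N` and `T` are identified: the common vertices of the two
graphs are exactly the leaves of each side. -/
def SharedLeaves (N T : DGraph V) : Prop :=
  N.verts ∩ T.verts = leaves N ∧ N.verts ∩ T.verts = leaves T

/-- A witness that `H` is a subdivision of the tree `Tg`. -/
structure SubdivWitness (H Tg : DGraph V) where
  vmap : V → V
  pmap : V → V → List V
  vmap_mem : ∀ u ∈ Tg.verts, vmap u ∈ H.verts
  inj : ∀ u ∈ Tg.verts, ∀ v ∈ Tg.verts, vmap u = vmap v → u = v
  path_spec : ∀ ⦃u v⦄, Tg.Arc u v → DipathFrom H.Arc (vmap u) (vmap v) (pmap u v)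
  path_len : ∀ ⦃u v⦄, Tg.Arc u v → 2 ≤ (pmap u v).length
  internal_new : ∀ ⦃u v⦄, Tg.Arc u v → ∀ z ∈ pmap u v, z ≠ vmap u → z ≠ vmap v →
    ∀ w ∈ Tg.verts, vmap w ≠ z
  internal_disjoint : ∀ ⦃u v u' v'⦄, Tg.Arc u v → Tg.Arc u' v' → (u, v) ≠ (u', v') →
    ∀ z, z ∈ pmap u v → z ∈ pmap u' v' →
      (z = vmap u ∨ z = vmap v) ∧ (z = vmap u' ∨ z = vmap v')
  arcs_cover : ∀ a b, H.Arc a b → ∃ u v, Tg.Arc u v ∧ IsArcOf (pmap u v) a b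
  verts_cover : ∀ z ∈ H.verts, (∃ u ∈ Tg.verts, vmap u = z) ∨ ∃ u v, Tg.Arc u v ∧ z ∈ pmap u v

/-- `N` displays `T`: some subgraph of `N` is a subdivision of `T`, respecting
the (identified) leaf labels. -/
def Displays (N T : DGraph V) : Prop :=
  ∃ H : DGraph V, IsSubgraph H N ∧
    ∃ w : SubdivWitness H T, ∀ u ∈ T.verts ∩ N.verts, w.vmap u = u

/-- An embedding function of the tree `Tg` into the network `Ng`
(an embedding function on the display graph `D(Ng,Tg)`). -/
structure EmbOn (Tg Ng : DGraph V) where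
  vmap : V → V
  pmap : V → V → List V
  vmap_mem : ∀ u ∈ Tg.verts, vmap u ∈ Ng.verts
  path_spec : ∀ ⦃u v⦄, Tg.Arc u v → DipathFrom Ng.Arc (vmap u) (vmap v) (pmap u v)
  inj : ∀ u ∈ Tg.verts, ∀ v ∈ Tg.verts, vmap u = vmap v → u = v
  fixes : ∀ u ∈ Tg.verts ∩ Ng.verts, vmap u = u
  arc_disjoint : ∀ ⦃u v u' v'⦄, Tg.Arc u v → Tg.Arc u' v' → (u, v) ≠ (u', v') →
    ∀ e, e ∈ listArcs (pmap u v) → e ∉ listArcs (pmap u' v')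
  share : ∀ ⦃u v u' v'⦄, Tg.Arc u v → Tg.Arc u' v' → (u, v) ≠ (u', v') →
    ∀ z, z ∈ pmap u v → z ∈ pmap u' v' →
      ∃ w, (w = u ∨ w = v) ∧ (w = u' ∨ w = v') ∧ vmap w = z

/-- The subgraph of the network consisting of all arcs lying on some embedding path. -/
def usedSubgraph (Tg Ng : DGraph V) (φ : EmbOn Tg Ng) : DGraph V where
  verts := {z : V | ∃ u v, Tg.Arc u v ∧ z ∈ φ.pmap u v}
  Arc a b := ∃ u v, Tg.Arc u v ∧ IsArcOf (φ.pmap u v) a b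
  arc_left := by
    rintro a b ⟨u, v, huv, harc⟩
    exact ⟨u, v, huv, isArcOf_mem_left harc⟩
  arc_right := by
    rintro a b ⟨u, v, huv, harc⟩
    exact ⟨u, v, huv, isArcOf_mem_right harc⟩

/-- A display graph: a DAG whose vertex set is covered by a tree side `VT`
and a network side `VN`, satisfying the degree conditions of the paper. -/
structure DispGraph (V : Type) extends DGraph V where
  VT : Set V
  VN : Set V
  union_eq : VT ∪ VN = verts
  finite : verts.Finite
  acyclic : ∀ v : V, ¬ Relation.TransGen Arc v v
  tree_indeg : ∀ v : V, {u : V | Arc u v ∧ u ∈ VT ∧ v ∈ VT}.ncard ≤ 1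
  indeg_le : ∀ v : V, {u : V | Arc u v}.ncard ≤ 2
  outdeg_le : ∀ v : V, {u : V | Arc v u}.ncard ≤ 2
  totdeg_le : ∀ v : V, {u : V | Arc u v}.ncard + {u : V | Arc v u}.ncard ≤ 3
  shared_out : ∀ v ∈ VT ∩ VN, ∀ u, ¬ Arc v u
  shared_in_T : ∀ v ∈ VT ∩ VN, {u : V | Arc u v ∧ u ∈ VT}.ncard ≤ 1
  shared_in_N : ∀ v ∈ VT ∩ VN, {u : V | Arc u v ∧ u ∈ VN}.ncard ≤ 1

/-- The tree side of a display graph. -/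
def DispGraph.treeSide (G : DispGraph V) : DGraph V where
  verts := G.VT
  Arc u v := G.Arc u v ∧ u ∈ G.VT ∧ v ∈ G.VT
  arc_left := by intro u v h; exact h.2.1
  arc_right := by intro u v h; exact h.2.2

/-- The network side of a display graph. -/
def DispGraph.netSide (G : DispGraph V) : DGraph V where
  verts := G.VN
  Arc u v := G.Arc u v ∧ u ∈ G.VN ∧ v ∈ G.VN
  arc_left := by intro u v h; exact h.2.1
  arc_right := by intro u v h; exact h.2.2

def DispGraph.TArc (G : DispGraph V) (u v : V) : Prop := G.treeSide.Arc u v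
def DispGraph.NArc (G : DispGraph V) (u v : V) : Prop := G.netSide.Arc u v
noncomputable def DispGraph.inDeg (G : DispGraph V) : V → ℕ := G.toDGraph.inDeg
noncomputable def DispGraph.outDeg (G : DispGraph V) : V → ℕ := G.toDGraph.outDeg

/-- An embedding function on a display graph: an embedding of its tree side into
its network side. -/
abbrev EmbFun (G : DispGraph V) := EmbOn G.treeSide G.netSide

/-- The data of a containment structure: a display graph, an embedding function on it,
and an isolabelling into vertices of the ambient display graph or labels from `Λ`. -/
structure CStruct (V Λ : Type) where
  G : DispGraph V
  emb : EmbFun G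
  ι : V → V ⊕ Λ

/-- Relabelling a containment structure by a restriction function. -/
def CStruct.relabel (g : V ⊕ Λ → V ⊕ Λ) (χ : CStruct V Λ) : CStruct V Λ :=
  ⟨χ.G, χ.emb, fun v => g (χ.ι v)⟩

/-- `ι` is an `(S,Y)`-isolabelling on the display graph of `χ`, relative to the
ambient display graph `Din`. -/
def IsIsolabelling (Din : DispGraph V) (S : Set V) (Ys : Set Λ) (χ : CStruct V Λ) : Prop :=
  (∀ u ∈ χ.G.verts, (∃ s ∈ S, χ.ι u = Sum.inl s) ∨ (∃ y ∈ Ys, χ.ι u = Sum.inr y)) ∧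
  (∀ s ∈ S, ∃ u ∈ χ.G.verts, χ.ι u = Sum.inl s) ∧
  (∀ u ∈ χ.G.verts, ∀ s ∈ S, χ.ι u = Sum.inl s →
    (s ∈ Din.VN → u ∈ χ.G.VN) ∧ (s ∈ Din.VT → u ∈ χ.G.VT)) ∧
  (∀ u ∈ χ.G.verts, ∀ v ∈ χ.G.verts, ∀ s ∈ S, χ.ι u = Sum.inl s → χ.ι v = Sum.inl s → u = v) ∧
  (∀ u ∈ χ.G.verts, ∀ v ∈ χ.G.verts, ∀ s ∈ S, ∀ t ∈ S,
    χ.ι u = Sum.inl s → χ.ι v = Sum.inl t → (χ.G.Arc u v ↔ Din.Arc s t))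

/-- `χ` is an `(S,Y)`-containment structure relative to the ambient display graph `Din`. -/
def IsCS (Din : DispGraph V) (S : Set V) (Ys : Set Λ) (χ : CStruct V Λ) : Prop :=
  IsIsolabelling Din S Ys χ ∧
  (∀ u ∈ χ.G.verts, ∀ s ∈ S, χ.ι u = Sum.inl s →
    χ.G.inDeg u = Din.inDeg s ∧ χ.G.outDeg u = Din.outDeg s) ∧
  (∀ u ∈ χ.G.VT, χ.ι u ≠ χ.ι (χ.emb.vmap u) → χ.G.outDeg u = 2)

/-- A tree arc `uv` is `y`-redundant. -/
def TArcRedundant (χ : CStruct V Λ) (y : Λ) (u v : V) : Prop :=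
  χ.G.TArc u v ∧ χ.ι u = Sum.inr y ∧ χ.ι v = Sum.inr y ∧
    ∀ z ∈ χ.emb.pmap u v, χ.ι z = Sum.inr y

/-- A network arc `ab` is `y`-redundant. -/
def NArcRedundant (χ : CStruct V Λ) (y : Λ) (a b : V) : Prop :=
  χ.G.NArc a b ∧ χ.ι a = Sum.inr y ∧ χ.ι b = Sum.inr y ∧
    ∀ u v, χ.G.TArc u v → IsArcOf (χ.emb.pmap u v) a b → TArcRedundant χ y u v

def ArcRedundant (χ : CStruct V Λ) (y : Λ) (u v : V) : Prop :=
  TArcRedundant χ y u v ∨ NArcRedundant χ y u v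

/-- A tree vertex `v` is `y`-redundant. -/
def TVertRedundant (χ : CStruct V Λ) (y : Λ) (v : V) : Prop :=
  v ∈ χ.G.VT ∧ χ.ι v = Sum.inr y ∧ χ.ι (χ.emb.vmap v) = Sum.inr y ∧
  (∀ u, χ.G.Arc u v → ArcRedundant χ y u v) ∧
  (∀ u, χ.G.Arc v u → ArcRedundant χ y v u) ∧
  (∀ u, χ.G.Arc u (χ.emb.vmap v) → ArcRedundant χ y u (χ.emb.vmap v)) ∧
  (∀ u, χ.G.Arc (χ.emb.vmap v) u → ArcRedundant χ y (χ.emb.vmap v) u)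

/-- A network vertex `v` is `y`-redundant. -/
def NVertRedundant (χ : CStruct V Λ) (y : Λ) (v : V) : Prop :=
  v ∈ χ.G.VN ∧ χ.ι v = Sum.inr y ∧
  (∀ u, χ.G.Arc u v → ArcRedundant χ y u v) ∧
  (∀ u, χ.G.Arc v u → ArcRedundant χ y v u) ∧
  (∀ w ∈ χ.G.VT, χ.emb.vmap w = v → TVertRedundant χ y w)

def VertRedundant (χ : CStruct V Λ) (y : Λ) (v : V) : Prop :=
  TVertRedundant χ y v ∨ NVertRedundant χ y v

/-- `χ'` is the `g`-restriction of `χ`: relabel by `g` and delete all redundant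
arcs and vertices; the embedding and isolabelling are restricted accordingly. -/
def IsRestrictionOf (g : V ⊕ Λ → V ⊕ Λ) (χ' χ : CStruct V Λ) : Prop :=
  χ'.G.verts = χ.G.verts \ {v : V | ∃ y, VertRedundant (χ.relabel g) y v} ∧
  (∀ u v, χ'.G.Arc u v ↔ (χ.G.Arc u v ∧ ¬ ∃ y, ArcRedundant (χ.relabel g) y u v)) ∧
  χ'.G.VT = χ.G.VT ∩ χ'.G.verts ∧
  χ'.G.VN = χ.G.VN ∩ χ'.G.verts ∧
  (∀ v ∈ χ'.G.VT, χ'.emb.vmap v = χ.emb.vmap v) ∧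
  (∀ u v, χ'.G.TArc u v → χ'.emb.pmap u v = χ.emb.pmap u v) ∧
  (∀ v ∈ χ'.G.verts, χ'.ι v = g (χ.ι v))

/-- `g : S ∪ Y → S' ∪ Y` is a restriction function: identity on `S'`, mapping the rest
of `S` into `Y`, and mapping `Y` into `Y`. -/
def IsRestrictionFun (S S' : Set V) (Ys : Set Λ) (g : V ⊕ Λ → V ⊕ Λ) : Prop :=
  (∀ v ∈ S', g (Sum.inl v) = Sum.inl v) ∧
  (∀ v ∈ S, v ∉ S' → ∃ y ∈ Ys, g (Sum.inl v) = Sum.inr y) ∧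
  (∀ y ∈ Ys, ∃ y' ∈ Ys, g (Sum.inr y) = Sum.inr y')

/-- A well-behaved containment structure. -/
def WellBehaved (Din : DispGraph V) (Ys : Set Λ) (χ : CStruct V Λ) : Prop :=
  (∀ u v, χ.G.Arc u v → ¬ ∃ y ∈ Ys, ArcRedundant χ y u v) ∧
  (∀ v ∈ χ.G.verts, ¬ ∃ y ∈ Ys, VertRedundant χ y v) ∧
  (∀ u v, χ.G.Arc u v → ∀ y ∈ Ys, ∀ y' ∈ Ys,
    χ.ι u = Sum.inr y → χ.ι v = Sum.inr y' → y = y') ∧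
  (∀ u ∈ χ.G.verts, ∀ v ∈ χ.G.verts, ∀ s t : V, χ.ι u = Sum.inl s → χ.ι v = Sum.inl t →
    Relation.ReflTransGen χ.G.Arc u v → Relation.ReflTransGen Din.Arc s t)

/-- The labels used for signatures and reconciliations. -/
inductive Lab : Type where
  | past | future | left | right
deriving DecidableEq

/-- The restriction function sending every vertex of `P` to the label `y`. -/
noncomputable def sendVerts (P : Set V) (y : Lab) : V ⊕ Lab → V ⊕ Lab
  | Sum.inl v => if v ∈ P then Sum.inr y else Sum.inl v
  | Sum.inr y' => Sum.inr y'

/-- The restriction function sending `A` to label `a` and `B` to label `b`. -/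
noncomputable def sendVerts2 (A : Set V) (a : Lab) (B : Set V) (b : Lab) :
    V ⊕ Lab → V ⊕ Lab
  | Sum.inl v => if v ∈ A then Sum.inr a else if v ∈ B then Sum.inr b else Sum.inl v
  | Sum.inr y => Sum.inr y

/-- The restriction function merging all labels in `A` into the label `y`. -/
noncomputable def sendLabs (A : Set Lab) (y : Lab) : V ⊕ Lab → V ⊕ Lab
  | Sum.inl v => Sum.inl v
  | Sum.inr y' => if y' ∈ A then Sum.inr y else Sum.inr y'

/-- The restriction function sending label `a` to `ya` and label `b` to `yb`. -/
def sendTwoLabs (a ya b yb : Lab) : V ⊕ Lab → V ⊕ Lab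
  | Sum.inl v => Sum.inl v
  | Sum.inr y => if y = a then Sum.inr ya else if y = b then Sum.inr yb else Sum.inr y

/-- `(P,S,F)` is a bag of a tree decomposition of `Din`: a partition of the vertices
with `S` separating `P` from `F`. -/
def IsBag (Din : DispGraph V) (P S F : Set V) : Prop :=
  P ∪ S ∪ F = Din.verts ∧ Disjoint P S ∧ Disjoint P F ∧ Disjoint S F ∧
  ∀ u v, (Din.Arc u v ∨ Din.Arc v u) → u ∈ P → v ∈ F → False

def pfLabs : Set Lab := {Lab.past, Lab.future}
def lrfLabs : Set Lab := {Lab.left, Lab.right, Lab.future}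

/-- A signature for a bag with present `S` is an `(S,{past,future})`-containment structure. -/
def IsSignature (Din : DispGraph V) (S : Set V) (σ : CStruct V Lab) : Prop :=
  IsCS Din S pfLabs σ

/-- An `F`-partial solution for a bag `(P,S,F)` is a `(P∪S,{future})`-containment structure. -/
def IsPartialSolution (Din : DispGraph V) (P S : Set V) (ψ : CStruct V Lab) : Prop :=
  IsCS Din (P ∪ S) ({Lab.future} : Set Lab) ψ

/-- A (well-behaved) signature is valid for the bag `(P,S,F)` if it is the
`(P→past)`-restriction of a well-behaved `F`-partial solution. -/
def ValidSig (Din : DispGraph V) (P S F : Set V) (σ : CStruct V Lab) : Prop :=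
  ∃ ψ : CStruct V Lab, IsPartialSolution Din P S ψ ∧
    WellBehaved Din ({Lab.future} : Set Lab) ψ ∧
    IsRestrictionOf (sendVerts P Lab.past) σ ψ

/-- A reconciliation for a Join bag with present `S` is an
`(S,{left,right,future})`-containment structure. -/
def IsReconciliation (Din : DispGraph V) (S : Set V) (μ : CStruct V Lab) : Prop :=
  IsCS Din S lrfLabs μ

/-- A reconciliation is valid for the Join bag `(L∪R,S,F)` if it is the
`(L→left, R→right)`-restriction of a well-behaved `F`-partial solution. -/
def ValidRecon (Din : DispGraph V) (L R S F : Set V) (μ : CStruct V Lab) : Prop :=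
  ∃ ψ : CStruct V Lab, IsCS Din (L ∪ R ∪ S) ({Lab.future} : Set Lab) ψ ∧
    WellBehaved Din ({Lab.future} : Set Lab) ψ ∧
    IsRestrictionOf (sendVerts2 L Lab.left R Lab.right) μ ψ

/-- `z` is an internal vertex of the replacement path `Pm u v`. -/
def internalOf (Pm : V → V → List V) (u v z : V) : Prop :=
  z ∈ Pm u v ∧ z ≠ u ∧ z ≠ v

/-- `σ₀` is a subdivision of the containment structure `σ`, with each network
arc `uv` of `σ` replaced by the path `Pm u v`. -/
def IsSubdivisionOfCS (σ₀ σ : CStruct V Λ) (Pm : V → V → List V) : Prop :=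
  σ₀.G.VT = σ.G.VT ∧
  (∀ u v, σ₀.G.TArc u v ↔ σ.G.TArc u v) ∧
  σ.G.VN ⊆ σ₀.G.VN ∧
  σ₀.G.verts = σ.G.verts ∪ {z : V | ∃ u v, σ.G.NArc u v ∧ z ∈ Pm u v} ∧
  (∀ u v, σ.G.NArc u v → DipathFrom σ₀.G.NArc u v (Pm u v) ∧ 2 ≤ (Pm u v).length) ∧
  (∀ u v, σ.G.NArc u v → 2 < (Pm u v).length →
    ∃ y : Λ, σ.ι u = Sum.inr y ∧ σ.ι v = Sum.inr y) ∧
  (∀ u v, σ.G.NArc u v → ∀ z, internalOf Pm u v z →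
    z ∉ σ.G.verts ∧ z ∈ σ₀.G.VN ∧ σ₀.ι z = σ.ι u) ∧
  (∀ u v u' v', σ.G.NArc u v → σ.G.NArc u' v' → (u, v) ≠ (u', v') →
    ∀ z, internalOf Pm u v z → ¬ internalOf Pm u' v' z) ∧
  (∀ a b, σ₀.G.NArc a b ↔ ∃ u v, σ.G.NArc u v ∧ IsArcOf (Pm u v) a b) ∧
  (∀ v ∈ σ.G.verts, σ₀.ι v = σ.ι v) ∧
  (∀ v ∈ σ.G.VT, σ₀.emb.vmap v = σ.emb.vmap v) ∧
  (∀ u v, σ.G.TArc u v →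
    (σ₀.emb.pmap u v).head? = (σ.emb.pmap u v).head? ∧
    (σ₀.emb.pmap u v).getLast? = (σ.emb.pmap u v).getLast? ∧
    ∀ a b, IsArcOf (σ₀.emb.pmap u v) a b ↔
      ∃ c d, IsArcOf (σ.emb.pmap u v) c d ∧ IsArcOf (Pm c d) a b)

/-- `χ` has a long `y`-path: a suppressible degree-(1,1) network vertex between two
network arcs, all three vertices labelled `y`, with no tree vertex embedded into it. -/
def LongYPath (χ : CStruct V Λ) (y : Λ) : Prop :=
  ∃ x₁ x₂ x₃ : V, χ.G.NArc x₁ x₂ ∧ χ.G.NArc x₂ x₃ ∧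
    {u : V | χ.G.NArc u x₂}.ncard = 1 ∧ {u : V | χ.G.NArc x₂ u}.ncard = 1 ∧
    χ.ι x₁ = Sum.inr y ∧ χ.ι x₂ = Sum.inr y ∧ χ.ι x₃ = Sum.inr y ∧
    ∀ w ∈ χ.G.VT, χ.emb.vmap w ≠ x₂

def IsCompact (χ : CStruct V Λ) : Prop := ∀ y : Λ, ¬ LongYPath χ y

/-- `σ` is the compact form of `σ₀`: `σ` is compact and `σ₀` is a subdivision of `σ`. -/
def IsCompactFormOf (σ σ₀ : CStruct V Λ) : Prop :=
  IsCompact σ ∧ ∃ Pm : V → V → List V, IsSubdivisionOfCS σ₀ σ Pm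

/-- Isomorphism of containment structures. -/
def CSIso (χ χ' : CStruct V Λ) : Prop :=
  ∃ f : V → V, Set.BijOn f χ.G.verts χ'.G.verts ∧
    (∀ v ∈ χ.G.verts, (v ∈ χ.G.VT ↔ f v ∈ χ'.G.VT)) ∧
    (∀ v ∈ χ.G.verts, (v ∈ χ.G.VN ↔ f v ∈ χ'.G.VN)) ∧
    (∀ u ∈ χ.G.verts, ∀ v ∈ χ.G.verts, (χ.G.Arc u v ↔ χ'.G.Arc (f u) (f v))) ∧
    (∀ v ∈ χ.G.verts, χ'.ι (f v) = χ.ι v) ∧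
    (∀ v ∈ χ.G.VT, χ'.emb.vmap (f v) = f (χ.emb.vmap v)) ∧
    (∀ u v, χ.G.TArc u v → χ'.emb.pmap (f u) (f v) = (χ.emb.pmap u v).map f)


/-! ### Auxiliary development -/

section Aux
variable {V Λ : Type}

lemma isArcOf_cons_cons {x y : V} {xs : List V} {a b : V} :
    IsArcOf (x :: y :: xs) a b ↔ (a = x ∧ b = y) ∨ IsArcOf (y :: xs) a b := by
  simp [IsArcOf, listArcs, Prod.ext_iff]

lemma chain'_of_isArcOf {A B : V → V → Prop} :
    ∀ {p : List V}, p.Chain' A → (∀ a b, IsArcOf p a b → B a b) → p.Chain' B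
  | [], _, _ => List.isChain_nil
  | [x], _, _ => List.isChain_singleton x
  | x :: y :: xs, h, hab => by
    simp only [List.Chain', List.isChain_cons_cons] at h ⊢
    refine ⟨hab x y (isArcOf_cons_cons.2 (Or.inl ⟨rfl, rfl⟩)), ?_⟩
    exact chain'_of_isArcOf h.2 (fun a b hm => hab a b (isArcOf_cons_cons.2 (Or.inr hm)))

lemma isArcOf_of_chain' {A : V → V → Prop} :
    ∀ {p : List V}, p.Chain' A → ∀ {a b}, IsArcOf p a b → A a b
  | [], _, _, _, h => by simp [IsArcOf, listArcs] at h
  | [x], _, _, _, h => by simp [IsArcOf, listArcs] at h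
  | x :: y :: xs, h, a, b, hab => by
    simp only [List.Chain', List.isChain_cons_cons] at h
    rcases isArcOf_cons_cons.1 hab with ⟨rfl, rfl⟩ | hm
    · exact h.1
    · exact isArcOf_of_chain' h.2 hm

lemma mem_arc_of_mem :
    ∀ (p : List V), 2 ≤ p.length → ∀ x ∈ p, ∃ a b, IsArcOf p a b ∧ (x = a ∨ x = b)
  | [], h, _, _ => by simp at h
  | [_], h, _, _ => by simp at h
  | u :: v :: xs, _, x, hx => by
    rcases List.mem_cons.1 hx with heq | hx'
    · exact ⟨u, v, isArcOf_cons_cons.2 (Or.inl ⟨rfl, rfl⟩), Or.inl heq⟩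
    · cases xs with
      | nil =>
        have heq := List.mem_singleton.1 hx'
        exact ⟨u, v, isArcOf_cons_cons.2 (Or.inl ⟨rfl, rfl⟩), Or.inr heq⟩
      | cons w ys =>
        obtain ⟨a, b, hab, hor⟩ := mem_arc_of_mem (v :: w :: ys) (by simp) x hx'
        exact ⟨a, b, isArcOf_cons_cons.2 (Or.inr hab), hor⟩

lemma mem_of_head?_eq {p : List V} {a : V} (h : p.head? = some a) : a ∈ p := by
  cases p with
  | nil => simp at h
  | cons x xs => simp at h; subst h; exact List.mem_cons_self

lemma length_two_of_dipath {p : List V} {a b : V} (ha : p.head? = some a)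
    (hb : p.getLast? = some b) (hab : a ≠ b) : 2 ≤ p.length := by
  match p with
  | [] => simp at ha
  | [x] =>
    simp at ha hb
    exact absurd (ha.symm.trans hb) hab
  | x :: y :: xs => simp [Nat.succ_le_succ, Nat.succ_le_succ_iff]

/-- an arc of a display graph cannot be both a tree arc and a network arc -/
lemma not_tarc_narc {G : DispGraph V} {u v : V} (ht : G.TArc u v) (hn : G.NArc u v) :
    False :=
  G.shared_out u ⟨ht.2.1, hn.2.1⟩ v ht.1

lemma tarc_ne {G : DispGraph V} {u v : V} (ht : G.TArc u v) : u ≠ v := by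
  rintro rfl
  exact G.acyclic u (Relation.TransGen.single ht.1)

lemma tarc_arc {G : DispGraph V} {u v : V} (ht : G.TArc u v) : G.Arc u v := ht.1

/-- the path of a tree arc has length at least two -/
lemma pmap_two_le (χ : CStruct V Λ) {u v : V} (ht : χ.G.TArc u v) :
    2 ≤ (χ.emb.pmap u v).length := by
  have hp := χ.emb.path_spec ht
  refine length_two_of_dipath hp.2.2.1 hp.2.2.2 ?_
  intro hvm
  exact tarc_ne ht (χ.emb.inj u ht.2.1 v ht.2.2 hvm)

lemma vmap_mem_pmap (χ : CStruct V Λ) {u v : V} (ht : χ.G.TArc u v) :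
    χ.emb.vmap u ∈ χ.emb.pmap u v :=
  mem_of_head?_eq (χ.emb.path_spec ht).2.2.1

lemma VN_subset_verts (G : DispGraph V) : G.VN ⊆ G.verts := by
  rw [← G.union_eq]; exact Set.subset_union_right

lemma VT_subset_verts (G : DispGraph V) : G.VT ⊆ G.verts := by
  rw [← G.union_eq]; exact Set.subset_union_left

end Aux


section Mono
variable {χ : CStruct V Λ} {h : V ⊕ Λ → V ⊕ Λ}

lemma relabel_ι (χ : CStruct V Λ) (h : V ⊕ Λ → V ⊕ Λ) (v : V) :
    (χ.relabel h).ι v = h (χ.ι v) := rfl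

lemma tarcRed_mono (hfix : ∀ y : Λ, h (Sum.inr y) = Sum.inr y) {y : Λ} {u v : V}
    (hr : TArcRedundant χ y u v) : TArcRedundant (χ.relabel h) y u v := by
  obtain ⟨ht, hu, hv, hp⟩ := hr
  refine ⟨ht, ?_, ?_, fun z hz => ?_⟩
  · show h (χ.ι u) = _; rw [hu]; exact hfix y
  · show h (χ.ι v) = _; rw [hv]; exact hfix y
  · show h (χ.ι z) = _; rw [hp z hz]; exact hfix y

lemma narcRed_mono (hfix : ∀ y : Λ, h (Sum.inr y) = Sum.inr y) {y : Λ} {a b : V}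
    (hr : NArcRedundant χ y a b) : NArcRedundant (χ.relabel h) y a b := by
  obtain ⟨hn, ha, hb, hq⟩ := hr
  refine ⟨hn, ?_, ?_, fun u v ht hab => tarcRed_mono hfix (hq u v ht hab)⟩
  · show h (χ.ι a) = _; rw [ha]; exact hfix y
  · show h (χ.ι b) = _; rw [hb]; exact hfix y

lemma arcRed_mono (hfix : ∀ y : Λ, h (Sum.inr y) = Sum.inr y) {y : Λ} {u v : V}
    (hr : ArcRedundant χ y u v) : ArcRedundant (χ.relabel h) y u v := by
  rcases hr with hr | hr
  · exact Or.inl (tarcRed_mono hfix hr)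
  · exact Or.inr (narcRed_mono hfix hr)

lemma tvertRed_mono (hfix : ∀ y : Λ, h (Sum.inr y) = Sum.inr y) {y : Λ} {v : V}
    (hr : TVertRedundant χ y v) : TVertRedundant (χ.relabel h) y v := by
  obtain ⟨hvT, h1, h2, h3, h4, h5, h6⟩ := hr
  refine ⟨hvT, ?_, ?_, fun u hu => arcRed_mono hfix (h3 u hu),
    fun u hu => arcRed_mono hfix (h4 u hu), fun u hu => arcRed_mono hfix (h5 u hu),
    fun u hu => arcRed_mono hfix (h6 u hu)⟩
  · show h (χ.ι v) = _; rw [h1]; exact hfix y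
  · show h (χ.ι (χ.emb.vmap v)) = _; rw [h2]; exact hfix y

lemma nvertRed_mono (hfix : ∀ y : Λ, h (Sum.inr y) = Sum.inr y) {y : Λ} {v : V}
    (hr : NVertRedundant χ y v) : NVertRedundant (χ.relabel h) y v := by
  obtain ⟨hvN, h1, h2, h3, h4⟩ := hr
  refine ⟨hvN, ?_, fun u hu => arcRed_mono hfix (h2 u hu),
    fun u hu => arcRed_mono hfix (h3 u hu),
    fun w hw hvw => tvertRed_mono hfix (h4 w hw hvw)⟩
  show h (χ.ι v) = _; rw [h1]; exact hfix y

lemma vertRed_mono (hfix : ∀ y : Λ, h (Sum.inr y) = Sum.inr y) {y : Λ} {v : V}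
    (hr : VertRedundant χ y v) : VertRedundant (χ.relabel h) y v := by
  rcases hr with hr | hr
  · exact Or.inl (tvertRed_mono hfix hr)
  · exact Or.inr (nvertRed_mono hfix hr)

end Mono

section Raw
variable {χ : CStruct V Λ}

lemma vertRed_incident {y : Λ} {v : V} (hr : VertRedundant χ y v) :
    (∀ u, χ.G.Arc u v → ArcRedundant χ y u v) ∧
    (∀ u, χ.G.Arc v u → ArcRedundant χ y v u) := by
  rcases hr with ⟨_, _, _, h3, h4, _, _⟩ | ⟨_, _, h3, h4, _⟩
  · exact ⟨h3, h4⟩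
  · exact ⟨h3, h4⟩

lemma arcRed_labels {y : Λ} {u v : V} (hr : ArcRedundant χ y u v) :
    χ.ι u = Sum.inr y ∧ χ.ι v = Sum.inr y := by
  rcases hr with ⟨_, h1, h2, _⟩ | ⟨_, h1, h2, _⟩ <;> exact ⟨h1, h2⟩

variable (χ) (g : V ⊕ Λ → V ⊕ Λ)

lemma arc_endpoints_survive {u v : V} (ha : χ.G.Arc u v)
    (hs : ¬ ∃ y, ArcRedundant (χ.relabel g) y u v) :
    ¬ (∃ y, VertRedundant (χ.relabel g) y u) ∧
    ¬ (∃ y, VertRedundant (χ.relabel g) y v) := by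
  constructor <;> rintro ⟨y, hr⟩
  · exact hs ⟨y, (vertRed_incident hr).2 v ha⟩
  · exact hs ⟨y, (vertRed_incident hr).1 u ha⟩

lemma tarc_path_survive {u v : V} (ht : χ.G.TArc u v)
    (hs : ¬ ∃ y, ArcRedundant (χ.relabel g) y u v) :
    ∀ a b, IsArcOf (χ.emb.pmap u v) a b →
      χ.G.NArc a b ∧ ¬ ∃ y, ArcRedundant (χ.relabel g) y a b := by
  intro a b hab
  have hp := χ.emb.path_spec ht
  have hn : χ.G.NArc a b := isArcOf_of_chain' hp.1 hab
  refine ⟨hn, ?_⟩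
  rintro ⟨y, hr | hr⟩
  · exact not_tarc_narc hr.1 hn
  · exact hs ⟨y, Or.inl (hr.2.2.2 u v ht hab)⟩

lemma tarc_path_members_survive {u v : V} (ht : χ.G.TArc u v)
    (hs : ¬ ∃ y, ArcRedundant (χ.relabel g) y u v) :
    ∀ x ∈ χ.emb.pmap u v, x ∈ χ.G.VN ∧ ¬ ∃ y, VertRedundant (χ.relabel g) y x := by
  intro x hx
  obtain ⟨a, b, hab, hor⟩ := mem_arc_of_mem _ (pmap_two_le χ ht) x hx
  obtain ⟨hn, hsab⟩ := tarc_path_survive χ g ht hs a b hab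
  have hend := arc_endpoints_survive χ g hn.1 hsab
  rcases hor with rfl | rfl
  · exact ⟨hn.2.1, hend.1⟩
  · exact ⟨hn.2.2, hend.2⟩

lemma vmap_survive {v : V} (hvT : v ∈ χ.G.VT)
    (hs : ¬ ∃ y, VertRedundant (χ.relabel g) y v) :
    χ.emb.vmap v ∈ χ.G.VN ∧ ¬ ∃ y, VertRedundant (χ.relabel g) y (χ.emb.vmap v) := by
  have hmVN : χ.emb.vmap v ∈ χ.G.VN := χ.emb.vmap_mem v hvT
  refine ⟨hmVN, ?_⟩
  rintro ⟨y, hr | hr⟩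
  · have hmVT : χ.emb.vmap v ∈ χ.G.VT := hr.1
    have hfx : χ.emb.vmap (χ.emb.vmap v) = χ.emb.vmap v :=
      χ.emb.fixes _ ⟨hmVT, hmVN⟩
    have : v = χ.emb.vmap v := χ.emb.inj v hvT _ hmVT hfx.symm
    exact hs ⟨y, Or.inl (this ▸ hr)⟩
  · exact hs ⟨y, Or.inl (hr.2.2.2.2 v hvT rfl)⟩

end Raw


section Construct
variable (χ : CStruct V Λ) (g : V ⊕ Λ → V ⊕ Λ)

/-- vertices surviving the `g`-restriction of `χ` -/
def rVerts : Set V := χ.G.verts \ {v : V | ∃ y, VertRedundant (χ.relabel g) y v}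

/-- surviving arcs -/
def rArc (u v : V) : Prop :=
  χ.G.Arc u v ∧ ¬ ∃ y, ArcRedundant (χ.relabel g) y u v

lemma rArc_left {u v : V} (ha : rArc χ g u v) : u ∈ rVerts χ g :=
  ⟨χ.G.arc_left ha.1, fun hr => by
    obtain ⟨y, hy⟩ := hr
    exact ha.2 ⟨y, (vertRed_incident hy).2 v ha.1⟩⟩

lemma rArc_right {u v : V} (ha : rArc χ g u v) : v ∈ rVerts χ g :=
  ⟨χ.G.arc_right ha.1, fun hr => by
    obtain ⟨y, hy⟩ := hr
    exact ha.2 ⟨y, (vertRed_incident hy).1 u ha.1⟩⟩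

lemma rdeg_in (v : V) : {u : V | rArc χ g u v}.ncard ≤ {u : V | χ.G.Arc u v}.ncard :=
  Set.ncard_le_ncard (fun u hu => hu.1)
    (χ.G.finite.subset (fun u hu => χ.G.arc_left hu))

lemma rdeg_out (v : V) : {u : V | rArc χ g v u}.ncard ≤ {u : V | χ.G.Arc v u}.ncard :=
  Set.ncard_le_ncard (fun u hu => hu.1)
    (χ.G.finite.subset (fun u hu => χ.G.arc_right hu))

/-- the display graph of the `g`-restriction of `χ` -/
noncomputable def restrictG : DispGraph V where
  verts := rVerts χ g
  Arc := rArc χ g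
  arc_left := fun _ _ h => rArc_left χ g h
  arc_right := fun _ _ h => rArc_right χ g h
  VT := χ.G.VT ∩ rVerts χ g
  VN := χ.G.VN ∩ rVerts χ g
  union_eq := by
    rw [← Set.union_inter_distrib_right, χ.G.union_eq]
    exact Set.inter_eq_self_of_subset_right Set.diff_subset
  finite := χ.G.finite.subset Set.diff_subset
  acyclic := fun v hv => χ.G.acyclic v (Relation.TransGen.mono (fun a b h => h.1) v v hv)
  tree_indeg := by
    intro v
    have hfin : {u : V | χ.G.Arc u v ∧ u ∈ χ.G.VT ∧ v ∈ χ.G.VT}.Finite :=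
      χ.G.finite.subset (fun u hu => χ.G.arc_left hu.1)
    refine le_trans (Set.ncard_le_ncard ?_ hfin) (χ.G.tree_indeg v)
    rintro u ⟨h1, h2, h3⟩
    exact ⟨h1.1, h2.1, h3.1⟩
  indeg_le := fun v => le_trans (rdeg_in χ g v) (χ.G.indeg_le v)
  outdeg_le := fun v => le_trans (rdeg_out χ g v) (χ.G.outdeg_le v)
  totdeg_le := fun v => le_trans (add_le_add (rdeg_in χ g v) (rdeg_out χ g v))
    (χ.G.totdeg_le v)
  shared_out := fun v hv u ha => χ.G.shared_out v ⟨hv.1.1, hv.2.1⟩ u ha.1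
  shared_in_T := by
    intro v hv
    have hfin : {u : V | χ.G.Arc u v ∧ u ∈ χ.G.VT}.Finite :=
      χ.G.finite.subset (fun u hu => χ.G.arc_left hu.1)
    refine le_trans (Set.ncard_le_ncard ?_ hfin) (χ.G.shared_in_T v ⟨hv.1.1, hv.2.1⟩)
    rintro u ⟨h1, h2⟩
    exact ⟨h1.1, h2.1⟩
  shared_in_N := by
    intro v hv
    have hfin : {u : V | χ.G.Arc u v ∧ u ∈ χ.G.VN}.Finite :=
      χ.G.finite.subset (fun u hu => χ.G.arc_left hu.1)
    refine le_trans (Set.ncard_le_ncard ?_ hfin) (χ.G.shared_in_N v ⟨hv.1.1, hv.2.1⟩)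
    rintro u ⟨h1, h2⟩
    exact ⟨h1.1, h2.1⟩

lemma restrictG_verts : (restrictG χ g).verts = rVerts χ g := rfl
lemma restrictG_Arc (u v : V) : (restrictG χ g).Arc u v ↔ rArc χ g u v := Iff.rfl
lemma restrictG_VT : (restrictG χ g).VT = χ.G.VT ∩ rVerts χ g := rfl
lemma restrictG_VN : (restrictG χ g).VN = χ.G.VN ∩ rVerts χ g := rfl

lemma restrictG_tarc {u v : V} :
    (restrictG χ g).TArc u v ↔
      χ.G.TArc u v ∧ ¬ ∃ y, ArcRedundant (χ.relabel g) y u v := by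
  constructor
  · rintro ⟨⟨ha, hs⟩, hu, hv⟩
    have hu' : u ∈ χ.G.VT ∩ rVerts χ g := hu
    have hv' : v ∈ χ.G.VT ∩ rVerts χ g := hv
    exact ⟨⟨ha, hu'.1, hv'.1⟩, hs⟩
  · rintro ⟨⟨ha, hu, hv⟩, hs⟩
    exact ⟨⟨ha, hs⟩, ⟨hu, rArc_left χ g ⟨ha, hs⟩⟩, ⟨hv, rArc_right χ g ⟨ha, hs⟩⟩⟩

/-- the embedding function of the `g`-restriction of `χ` -/
noncomputable def restrictEmb : EmbFun (restrictG χ g) where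
  vmap := χ.emb.vmap
  pmap := χ.emb.pmap
  vmap_mem := by
    intro u hu
    have hu' : u ∈ χ.G.VT ∩ rVerts χ g := hu
    obtain ⟨h1, h2⟩ := vmap_survive χ g hu'.1 hu'.2.2
    show χ.emb.vmap u ∈ χ.G.VN ∩ rVerts χ g
    exact ⟨h1, VN_subset_verts χ.G h1, h2⟩
  path_spec := by
    intro u v ht
    obtain ⟨ht', hs⟩ := (restrictG_tarc χ g).1 ht
    obtain ⟨hc, hnd, hh, hl⟩ := χ.emb.path_spec ht'
    refine ⟨?_, hnd, hh, hl⟩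
    refine chain'_of_isArcOf hc (fun a b hab => ?_)
    obtain ⟨hn, hsab⟩ := tarc_path_survive χ g ht' hs a b hab
    have h1 := rArc_left χ g ⟨hn.1, hsab⟩
    have h2 := rArc_right χ g ⟨hn.1, hsab⟩
    show rArc χ g a b ∧ a ∈ χ.G.VN ∩ rVerts χ g ∧ b ∈ χ.G.VN ∩ rVerts χ g
    exact ⟨⟨hn.1, hsab⟩, ⟨hn.2.1, h1⟩, ⟨hn.2.2, h2⟩⟩
  inj := by
    intro u hu v hv h
    have hu' : u ∈ χ.G.VT ∩ rVerts χ g := hu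
    have hv' : v ∈ χ.G.VT ∩ rVerts χ g := hv
    exact χ.emb.inj u hu'.1 v hv'.1 h
  fixes := by
    intro u hu
    have hu' : u ∈ (χ.G.VT ∩ rVerts χ g) ∩ (χ.G.VN ∩ rVerts χ g) := hu
    exact χ.emb.fixes u ⟨hu'.1.1, hu'.2.1⟩
  arc_disjoint := by
    intro u v u' v' h1 h2 hne
    exact χ.emb.arc_disjoint ((restrictG_tarc χ g).1 h1).1 ((restrictG_tarc χ g).1 h2).1 hne
  share := by
    intro u v u' v' h1 h2 hne
    intro z hz hz'
    exact χ.emb.share ((restrictG_tarc χ g).1 h1).1 ((restrictG_tarc χ g).1 h2).1 hne z hz hz'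

/-- the `g`-restriction of `χ` -/
noncomputable def restrictCS : CStruct V Λ :=
  ⟨restrictG χ g, restrictEmb χ g, fun v => g (χ.ι v)⟩

lemma restrictCS_isRestriction : IsRestrictionOf g (restrictCS χ g) χ :=
  ⟨rfl, fun _ _ => Iff.rfl, rfl, rfl, fun _ _ => rfl, fun _ _ _ => rfl, fun _ _ => rfl⟩

end Construct


section Transfer
variable {h₁ h₂ : V ⊕ Λ → V ⊕ Λ} {σ ψ : CStruct V Λ}

lemma res_verts_subset (hres : IsRestrictionOf h₁ σ ψ) : σ.G.verts ⊆ ψ.G.verts := by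
  rw [hres.1]; exact Set.diff_subset

lemma res_mem_verts (hres : IsRestrictionOf h₁ σ ψ) {v : V} (hv : v ∈ ψ.G.verts)
    (hs : ¬ ∃ y, VertRedundant (ψ.relabel h₁) y v) : v ∈ σ.G.verts := by
  rw [hres.1]; exact ⟨hv, hs⟩

lemma res_not_red (hres : IsRestrictionOf h₁ σ ψ) {v : V} (hv : v ∈ σ.G.verts) :
    ¬ ∃ y, VertRedundant (ψ.relabel h₁) y v := by
  rw [hres.1] at hv; exact hv.2

lemma res_arc_iff (hres : IsRestrictionOf h₁ σ ψ) {u v : V} :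
    σ.G.Arc u v ↔ ψ.G.Arc u v ∧ ¬ ∃ y, ArcRedundant (ψ.relabel h₁) y u v :=
  hres.2.1 u v

lemma res_tarc_iff (hres : IsRestrictionOf h₁ σ ψ) {u v : V} :
    σ.G.TArc u v ↔ ψ.G.TArc u v ∧ ¬ ∃ y, ArcRedundant (ψ.relabel h₁) y u v := by
  constructor
  · rintro ⟨ha, hu, hv⟩
    rw [hres.2.2.1] at hu hv
    exact ⟨⟨((res_arc_iff hres).1 ha).1, hu.1, hv.1⟩, ((res_arc_iff hres).1 ha).2⟩
  · rintro ⟨⟨ha, hu, hv⟩, hs⟩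
    have ha' : σ.G.Arc u v := (res_arc_iff hres).2 ⟨ha, hs⟩
    have hend := arc_endpoints_survive ψ h₁ ha hs
    refine ⟨ha', ?_, ?_⟩ <;> rw [hres.2.2.1]
    · exact ⟨hu, res_mem_verts hres (ψ.G.arc_left ha) hend.1⟩
    · exact ⟨hv, res_mem_verts hres (ψ.G.arc_right ha) hend.2⟩

lemma res_narc_iff (hres : IsRestrictionOf h₁ σ ψ) {u v : V} :
    σ.G.NArc u v ↔ ψ.G.NArc u v ∧ ¬ ∃ y, ArcRedundant (ψ.relabel h₁) y u v := by
  constructor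
  · rintro ⟨ha, hu, hv⟩
    rw [hres.2.2.2.1] at hu hv
    exact ⟨⟨((res_arc_iff hres).1 ha).1, hu.1, hv.1⟩, ((res_arc_iff hres).1 ha).2⟩
  · rintro ⟨⟨ha, hu, hv⟩, hs⟩
    have ha' : σ.G.Arc u v := (res_arc_iff hres).2 ⟨ha, hs⟩
    have hend := arc_endpoints_survive ψ h₁ ha hs
    refine ⟨ha', ?_, ?_⟩ <;> rw [hres.2.2.2.1]
    · exact ⟨hu, res_mem_verts hres (ψ.G.arc_left ha) hend.1⟩
    · exact ⟨hv, res_mem_verts hres (ψ.G.arc_right ha) hend.2⟩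

lemma res_ι (hres : IsRestrictionOf h₁ σ ψ) {v : V} (hv : v ∈ σ.G.verts) :
    σ.ι v = h₁ (ψ.ι v) := hres.2.2.2.2.2.2 v hv

lemma res_vmap (hres : IsRestrictionOf h₁ σ ψ) {v : V} (hvT : v ∈ ψ.G.VT)
    (hv : v ∈ σ.G.verts) : σ.emb.vmap v = ψ.emb.vmap v := by
  refine hres.2.2.2.2.1 v ?_
  rw [hres.2.2.1]; exact ⟨hvT, hv⟩

lemma res_vmap_mem (hres : IsRestrictionOf h₁ σ ψ) {v : V} (hvT : v ∈ ψ.G.VT)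
    (hv : v ∈ σ.G.verts) : ψ.emb.vmap v ∈ σ.G.verts ∧ ψ.emb.vmap v ∈ ψ.G.VN := by
  obtain ⟨h1, h2⟩ := vmap_survive ψ h₁ hvT (res_not_red hres hv)
  exact ⟨res_mem_verts hres (VN_subset_verts ψ.G h1) h2, h1⟩

lemma res_pmap (hres : IsRestrictionOf h₁ σ ψ) {u v : V} (ht : σ.G.TArc u v) :
    σ.emb.pmap u v = ψ.emb.pmap u v := hres.2.2.2.2.2.1 u v ht

lemma res_path_mem (hres : IsRestrictionOf h₁ σ ψ) {u v : V} (ht : σ.G.TArc u v) :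
    ∀ x ∈ ψ.emb.pmap u v, x ∈ σ.G.verts := by
  intro x hx
  obtain ⟨htψ, hs⟩ := (res_tarc_iff hres).1 ht
  obtain ⟨h1, h2⟩ := tarc_path_members_survive ψ h₁ htψ hs x hx
  exact res_mem_verts hres (VN_subset_verts ψ.G h1) h2

lemma res_label_eq (hres : IsRestrictionOf h₁ σ ψ) {v : V} (hv : v ∈ σ.G.verts) :
    (σ.relabel h₂).ι v = ((ψ.relabel h₁).relabel h₂).ι v := by
  show h₂ (σ.ι v) = h₂ (h₁ (ψ.ι v))
  rw [res_ι hres hv]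

lemma tarcRed_transfer (hres : IsRestrictionOf h₁ σ ψ) {y : Λ} {u v : V}
    (ht : σ.G.TArc u v) :
    TArcRedundant ((ψ.relabel h₁).relabel h₂) y u v ↔
      TArcRedundant (σ.relabel h₂) y u v := by
  have hu : u ∈ σ.G.verts := σ.G.arc_left ht.1
  have hv : v ∈ σ.G.verts := σ.G.arc_right ht.1
  have hpm : σ.emb.pmap u v = ψ.emb.pmap u v := res_pmap hres ht
  have htψ : ψ.G.TArc u v := ((res_tarc_iff hres).1 ht).1
  constructor
  · rintro ⟨_, h1, h2, h3⟩
    refine ⟨ht, ?_, ?_, fun z hz => ?_⟩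
    · rw [res_label_eq hres hu]; exact h1
    · rw [res_label_eq hres hv]; exact h2
    · have hz' : z ∈ ψ.emb.pmap u v := by rwa [← hpm]
      rw [show (σ.relabel h₂).emb.pmap u v = σ.emb.pmap u v from rfl, hpm] at hz
      rw [res_label_eq hres (res_path_mem hres ht z hz')]
      exact h3 z hz'
  · rintro ⟨_, h1, h2, h3⟩
    refine ⟨htψ, ?_, ?_, fun z hz => ?_⟩
    · rw [← res_label_eq hres hu]; exact h1
    · rw [← res_label_eq hres hv]; exact h2
    · rw [← res_label_eq hres (res_path_mem hres ht z hz)]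
      refine h3 z ?_
      show z ∈ σ.emb.pmap u v
      rwa [hpm]

lemma narcRed_transfer (hfix : ∀ y : Λ, h₂ (Sum.inr y) = Sum.inr y)
    (hres : IsRestrictionOf h₁ σ ψ) {y : Λ} {a b : V}
    (hn : σ.G.NArc a b) :
    NArcRedundant ((ψ.relabel h₁).relabel h₂) y a b ↔
      NArcRedundant (σ.relabel h₂) y a b := by
  have ha : a ∈ σ.G.verts := σ.G.arc_left hn.1
  have hb : b ∈ σ.G.verts := σ.G.arc_right hn.1
  have hnψ : ψ.G.NArc a b := ((res_narc_iff hres).1 hn).1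
  constructor
  · rintro ⟨_, h1, h2, h3⟩
    refine ⟨hn, ?_, ?_, fun u v htσ hab => ?_⟩
    · rw [res_label_eq hres ha]; exact h1
    · rw [res_label_eq hres hb]; exact h2
    · have htσ' : σ.G.TArc u v := htσ
      have htψ : ψ.G.TArc u v := ((res_tarc_iff hres).1 htσ').1
      have hab' : IsArcOf (ψ.emb.pmap u v) a b := by
        rwa [show (σ.relabel h₂).emb.pmap u v = σ.emb.pmap u v from rfl,
          res_pmap hres htσ'] at hab
      exact (tarcRed_transfer hres htσ').1 (h3 u v htψ hab')
  · rintro ⟨_, h1, h2, h3⟩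
    refine ⟨hnψ, ?_, ?_, fun u v htψ hab => ?_⟩
    · rw [← res_label_eq hres ha]; exact h1
    · rw [← res_label_eq hres hb]; exact h2
    · have htψ' : ψ.G.TArc u v := htψ
      by_cases hrs : ∃ y', ArcRedundant (ψ.relabel h₁) y' u v
      · obtain ⟨y', hy'⟩ := hrs
        have hty' : TArcRedundant (ψ.relabel h₁) y' u v := by
          rcases hy' with hy' | hy'
          · exact hy'
          · exact absurd hy'.1 (fun hnn => not_tarc_narc htψ' hnn)
        have hA := tarcRed_mono hfix hty'
        have hlab : ((ψ.relabel h₁).relabel h₂).ι a = Sum.inr y' :=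
          hA.2.2.2 a (isArcOf_mem_left hab)
        have hlab2 : ((ψ.relabel h₁).relabel h₂).ι a = Sum.inr y := by
          rw [← res_label_eq hres ha]; exact h1
        obtain rfl : y' = y := Sum.inr.inj (hlab.symm.trans hlab2)
        exact hA
      · have htσ : σ.G.TArc u v := (res_tarc_iff hres).2 ⟨htψ', hrs⟩
        have hab' : IsArcOf ((σ.relabel h₂).emb.pmap u v) a b := by
          show IsArcOf (σ.emb.pmap u v) a b
          rwa [res_pmap hres htσ]
        exact (tarcRed_transfer hres htσ).2 (h3 u v htσ hab')

lemma arcRed_transfer (hfix : ∀ y : Λ, h₂ (Sum.inr y) = Sum.inr y)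
    (hres : IsRestrictionOf h₁ σ ψ) {y : Λ} {u v : V}
    (ha : σ.G.Arc u v) :
    ArcRedundant ((ψ.relabel h₁).relabel h₂) y u v ↔
      ArcRedundant (σ.relabel h₂) y u v := by
  have hs : ¬ ∃ y', ArcRedundant (ψ.relabel h₁) y' u v := ((res_arc_iff hres).1 ha).2
  constructor
  · rintro (hr | hr)
    · have htσ : σ.G.TArc u v := (res_tarc_iff hres).2 ⟨hr.1, hs⟩
      exact Or.inl ((tarcRed_transfer hres htσ).1 hr)
    · have hnσ : σ.G.NArc u v := (res_narc_iff hres).2 ⟨hr.1, hs⟩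
      exact Or.inr ((narcRed_transfer hfix hres hnσ).1 hr)
  · rintro (hr | hr)
    · exact Or.inl ((tarcRed_transfer hres hr.1).2 hr)
    · exact Or.inr ((narcRed_transfer hfix hres hr.1).2 hr)

lemma tvertRed_transfer (hfix : ∀ y : Λ, h₂ (Sum.inr y) = Sum.inr y)
    (hres : IsRestrictionOf h₁ σ ψ) {y : Λ} {v : V}
    (hvT : v ∈ ψ.G.VT) (hv : v ∈ σ.G.verts) :
    TVertRedundant ((ψ.relabel h₁).relabel h₂) y v ↔
      TVertRedundant (σ.relabel h₂) y v := by
  have hσvm : σ.emb.vmap v = ψ.emb.vmap v := res_vmap hres hvT hv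
  obtain ⟨hmσ, hmVN⟩ := res_vmap_mem hres hvT hv
  have hvσT : v ∈ σ.G.VT := by rw [hres.2.2.1]; exact ⟨hvT, hv⟩
  constructor
  · rintro ⟨_, h1, h2, h3, h4, h5, h6⟩
    refine ⟨hvσT, ?_, ?_, fun u hu => ?_, fun u hu => ?_, fun u hu => ?_, fun u hu => ?_⟩
    · rw [res_label_eq hres hv]; exact h1
    · show (σ.relabel h₂).ι (σ.emb.vmap v) = _
      rw [hσvm, res_label_eq hres hmσ]; exact h2
    · exact (arcRed_transfer hfix hres hu).1 (h3 u ((res_arc_iff hres).1 hu).1)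
    · exact (arcRed_transfer hfix hres hu).1 (h4 u ((res_arc_iff hres).1 hu).1)
    · have hu' : σ.G.Arc u (ψ.emb.vmap v) := by rwa [show (σ.relabel h₂).emb.vmap v = σ.emb.vmap v from rfl, hσvm] at hu
      exact hσvm ▸ ((arcRed_transfer hfix hres hu').1 (h5 u ((res_arc_iff hres).1 hu').1))
    · have hu' : σ.G.Arc (ψ.emb.vmap v) u := by rwa [show (σ.relabel h₂).emb.vmap v = σ.emb.vmap v from rfl, hσvm] at hu
      exact hσvm ▸ ((arcRed_transfer hfix hres hu').1 (h6 u ((res_arc_iff hres).1 hu').1))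
  · rintro ⟨_, h1, h2, h3, h4, h5, h6⟩
    have hAv : ((ψ.relabel h₁).relabel h₂).ι v = Sum.inr y := by
      rw [← res_label_eq hres hv]; exact h1
    have hAm : ((ψ.relabel h₁).relabel h₂).ι (ψ.emb.vmap v) = Sum.inr y := by
      rw [← res_label_eq hres hmσ, ← hσvm]; exact h2
    have key : ∀ u w, ψ.G.Arc u w → (w = v ∨ w = ψ.emb.vmap v ∨ u = v ∨ u = ψ.emb.vmap v) →
        (σ.G.Arc u w → ArcRedundant (σ.relabel h₂) y u w) →
        ArcRedundant ((ψ.relabel h₁).relabel h₂) y u w := by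
      intro u w haw hcase hσred
      by_cases hrs : ∃ y', ArcRedundant (ψ.relabel h₁) y' u w
      · obtain ⟨y', hy'⟩ := hrs
        have hA := arcRed_mono hfix hy'
        have hl := arcRed_labels hA
        have : y' = y := by
          rcases hcase with rfl | rfl | rfl | rfl
          · exact Sum.inr.inj (hl.2.symm.trans hAv)
          · exact Sum.inr.inj (hl.2.symm.trans hAm)
          · exact Sum.inr.inj (hl.1.symm.trans hAv)
          · exact Sum.inr.inj (hl.1.symm.trans hAm)
        exact this ▸ hA
      · have haσ : σ.G.Arc u w := (res_arc_iff hres).2 ⟨haw, hrs⟩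
        exact (arcRed_transfer hfix hres haσ).2 (hσred haσ)
    refine ⟨hvT, hAv, hAm, fun u hu => ?_, fun u hu => ?_, fun u hu => ?_, fun u hu => ?_⟩
    · exact key u v hu (Or.inl rfl) (fun haσ => h3 u haσ)
    · refine ?_
      by_cases hrs : ∃ y', ArcRedundant (ψ.relabel h₁) y' v u
      · obtain ⟨y', hy'⟩ := hrs
        have hA := arcRed_mono hfix hy'
        have hl := arcRed_labels hA
        have : y' = y := Sum.inr.inj (hl.1.symm.trans hAv)
        exact this ▸ hA
      · have haσ : σ.G.Arc v u := (res_arc_iff hres).2 ⟨hu, hrs⟩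
        exact (arcRed_transfer hfix hres haσ).2 (h4 u haσ)
    · refine key u (ψ.emb.vmap v) hu (Or.inr (Or.inl rfl)) (fun haσ => ?_)
      have haσ' : (σ.relabel h₂).G.Arc u ((σ.relabel h₂).emb.vmap v) := by
        show σ.G.Arc u (σ.emb.vmap v)
        rwa [hσvm]
      have := h5 u haσ'
      rwa [show (σ.relabel h₂).emb.vmap v = σ.emb.vmap v from rfl, hσvm] at this
    · by_cases hrs : ∃ y', ArcRedundant (ψ.relabel h₁) y' (ψ.emb.vmap v) u
      · obtain ⟨y', hy'⟩ := hrs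
        have hA := arcRed_mono hfix hy'
        have hl := arcRed_labels hA
        have : y' = y := Sum.inr.inj (hl.1.symm.trans hAm)
        exact this ▸ hA
      · have haσ : σ.G.Arc (ψ.emb.vmap v) u := (res_arc_iff hres).2 ⟨hu, hrs⟩
        have haσ' : σ.G.Arc (σ.emb.vmap v) u := by rwa [hσvm]
        exact (arcRed_transfer hfix hres haσ).2 (by
          have := h6 u haσ'
          rwa [show (σ.relabel h₂).emb.vmap v = σ.emb.vmap v from rfl, hσvm] at this)

lemma nvertRed_transfer (hfix : ∀ y : Λ, h₂ (Sum.inr y) = Sum.inr y)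
    (hres : IsRestrictionOf h₁ σ ψ) {y : Λ} {v : V}
    (hvN : v ∈ ψ.G.VN) (hv : v ∈ σ.G.verts) :
    NVertRedundant ((ψ.relabel h₁).relabel h₂) y v ↔
      NVertRedundant (σ.relabel h₂) y v := by
  have hvσN : v ∈ σ.G.VN := by rw [hres.2.2.2.1]; exact ⟨hvN, hv⟩
  constructor
  · rintro ⟨_, h1, h2, h3, h4⟩
    refine ⟨hvσN, ?_, fun u hu => ?_, fun u hu => ?_, fun w hw hvw => ?_⟩
    · rw [res_label_eq hres hv]; exact h1
    · exact (arcRed_transfer hfix hres hu).1 (h2 u ((res_arc_iff hres).1 hu).1)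
    · exact (arcRed_transfer hfix hres hu).1 (h3 u ((res_arc_iff hres).1 hu).1)
    · have hw0 : w ∈ σ.G.VT := hw
      have hw' : w ∈ ψ.G.VT ∧ w ∈ σ.G.verts := by rwa [hres.2.2.1] at hw0
      have hvw' : ψ.emb.vmap w = v := by
        rw [← res_vmap hres hw'.1 hw'.2]; exact hvw
      exact (tvertRed_transfer hfix hres hw'.1 hw'.2).1 (h4 w hw'.1 hvw')
  · rintro ⟨_, h1, h2, h3, h4⟩
    have hAv : ((ψ.relabel h₁).relabel h₂).ι v = Sum.inr y := by
      rw [← res_label_eq hres hv]; exact h1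
    refine ⟨hvN, hAv, fun u hu => ?_, fun u hu => ?_, fun w hwT hvw => ?_⟩
    · by_cases hrs : ∃ y', ArcRedundant (ψ.relabel h₁) y' u v
      · obtain ⟨y', hy'⟩ := hrs
        have hA := arcRed_mono hfix hy'
        have : y' = y := Sum.inr.inj ((arcRed_labels hA).2.symm.trans hAv)
        exact this ▸ hA
      · have haσ : σ.G.Arc u v := (res_arc_iff hres).2 ⟨hu, hrs⟩
        exact (arcRed_transfer hfix hres haσ).2 (h2 u haσ)
    · by_cases hrs : ∃ y', ArcRedundant (ψ.relabel h₁) y' v u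
      · obtain ⟨y', hy'⟩ := hrs
        have hA := arcRed_mono hfix hy'
        have : y' = y := Sum.inr.inj ((arcRed_labels hA).1.symm.trans hAv)
        exact this ▸ hA
      · have haσ : σ.G.Arc v u := (res_arc_iff hres).2 ⟨hu, hrs⟩
        exact (arcRed_transfer hfix hres haσ).2 (h3 u haσ)
    · have hwT' : w ∈ ψ.G.VT := hwT
      have hvw0 : ψ.emb.vmap w = v := hvw
      by_cases hws : ∃ y', VertRedundant (ψ.relabel h₁) y' w
      · obtain ⟨y', hy'⟩ := hws
        rcases hy' with hy' | hy'
        · have hlab : (ψ.relabel h₁).ι (ψ.emb.vmap w) = Sum.inr y' := hy'.2.2.1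
          have hlab2 : ((ψ.relabel h₁).relabel h₂).ι v = Sum.inr y' := by
            rw [← hvw0]
            show h₂ ((ψ.relabel h₁).ι (ψ.emb.vmap w)) = _
            rw [hlab]; exact hfix y'
          obtain rfl : y' = y := Sum.inr.inj (hlab2.symm.trans hAv)
          exact tvertRed_mono hfix hy'
        · have hwN : w ∈ ψ.G.VN := hy'.1
          have hfx : ψ.emb.vmap w = w := ψ.emb.fixes w ⟨hwT', hwN⟩
          rw [hfx] at hvw0
          subst hvw0
          exact absurd ⟨y', Or.inr hy'⟩ (res_not_red hres hv)
      · have hwσ : w ∈ σ.G.verts :=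
          res_mem_verts hres (VT_subset_verts ψ.G hwT') hws
        have hwσT : w ∈ σ.G.VT := by rw [hres.2.2.1]; exact ⟨hwT', hwσ⟩
        have hvwσ : σ.emb.vmap w = v := by rw [res_vmap hres hwT' hwσ]; exact hvw0
        exact (tvertRed_transfer hfix hres hwT' hwσ).2 (h4 w hwσT hvwσ)

lemma vertRed_transfer (hfix : ∀ y : Λ, h₂ (Sum.inr y) = Sum.inr y)
    (hres : IsRestrictionOf h₁ σ ψ) {y : Λ} {v : V}
    (hv : v ∈ σ.G.verts) :
    VertRedundant ((ψ.relabel h₁).relabel h₂) y v ↔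
      VertRedundant (σ.relabel h₂) y v := by
  constructor
  · rintro (hr | hr)
    · exact Or.inl ((tvertRed_transfer hfix hres hr.1 hv).1 hr)
    · exact Or.inr ((nvertRed_transfer hfix hres hr.1 hv).1 hr)
  · rintro (hr | hr)
    · have h0 : v ∈ σ.G.VT := hr.1
      have h1 : v ∈ ψ.G.VT ∧ v ∈ σ.G.verts := by rwa [hres.2.2.1] at h0
      exact Or.inl ((tvertRed_transfer hfix hres h1.1 hv).2 hr)
    · have h0 : v ∈ σ.G.VN := hr.1
      have h1 : v ∈ ψ.G.VN ∧ v ∈ σ.G.verts := by rwa [hres.2.2.2.1] at h0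
      exact Or.inr ((nvertRed_transfer hfix hres h1.1 hv).2 hr)

lemma arcDel (hfix : ∀ y : Λ, h₂ (Sum.inr y) = Sum.inr y)
    (hres : IsRestrictionOf h₁ σ ψ) {u v : V} (ha : ψ.G.Arc u v)
    (hs : ¬ ∃ y, ArcRedundant (ψ.relabel h₁) y u v) :
    (∃ y, ArcRedundant ((ψ.relabel h₁).relabel h₂) y u v) ↔
      (∃ y, ArcRedundant (σ.relabel h₂) y u v) :=
  exists_congr fun _ => arcRed_transfer hfix hres ((res_arc_iff hres).2 ⟨ha, hs⟩)

lemma vertDel (hfix : ∀ y : Λ, h₂ (Sum.inr y) = Sum.inr y)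
    (hres : IsRestrictionOf h₁ σ ψ) {v : V} (hv : v ∈ ψ.G.verts)
    (hs : ¬ ∃ y, VertRedundant (ψ.relabel h₁) y v) :
    (∃ y, VertRedundant ((ψ.relabel h₁).relabel h₂) y v) ↔
      (∃ y, VertRedundant (σ.relabel h₂) y v) :=
  exists_congr fun _ => vertRed_transfer hfix hres (res_mem_verts hres hv hs)

end Transfer


section Glue
variable {V : Type}

lemma vertRed_label {Λ : Type} {χ : CStruct V Λ} {y : Λ} {v : V}
    (hr : VertRedundant χ y v) : χ.ι v = Sum.inr y := by
  rcases hr with hr | hr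
  · exact hr.2.1
  · exact hr.2.1

lemma sendVerts_inr (Q : Set V) (y y' : Lab) :
    sendVerts Q y (Sum.inr y') = Sum.inr y' := rfl

lemma sendVerts_mem {Q : Set V} {y : Lab} {v : V} (h : v ∈ Q) :
    sendVerts Q y (Sum.inl v) = Sum.inr y := by simp [sendVerts, h]

lemma sendVerts_not_mem {Q : Set V} {y : Lab} {v : V} (h : v ∉ Q) :
    sendVerts Q y (Sum.inl v) = Sum.inl v := by simp [sendVerts, h]

lemma sendVerts_eq_inl {Q : Set V} {y : Lab} {x : V ⊕ Lab} {s : V}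
    (h : sendVerts Q y x = Sum.inl s) : x = Sum.inl s := by
  cases x with
  | inl v =>
    by_cases hv : v ∈ Q
    · rw [sendVerts_mem hv] at h; exact absurd h (by simp)
    · rwa [sendVerts_not_mem hv] at h
  | inr y' => exact absurd h (by simp [sendVerts])

lemma sendVerts_comm {P : Set V} {z : V} (hzP : z ∉ P) (x : V ⊕ Lab) :
    sendVerts ({z} : Set V) Lab.future (sendVerts P Lab.past x) =
      sendVerts P Lab.past (sendVerts ({z} : Set V) Lab.future x) := by
  cases x with
  | inr y => rfl
  | inl v =>
    by_cases hv : v ∈ P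
    · have hvz : v ∉ ({z} : Set V) := fun h => hzP (h ▸ hv)
      rw [sendVerts_mem hv, sendVerts_not_mem hvz, sendVerts_mem hv, sendVerts_inr]
    · by_cases hvz : v ∈ ({z} : Set V)
      · rw [sendVerts_not_mem hv, sendVerts_mem hvz, sendVerts_inr]
      · rw [sendVerts_not_mem hv, sendVerts_not_mem hvz, sendVerts_not_mem hv]

lemma relabel_comm {Λ : Type} {g₁ g₂ : V ⊕ Λ → V ⊕ Λ} (χ : CStruct V Λ)
    (h : ∀ x, g₂ (g₁ x) = g₁ (g₂ x)) :
    (χ.relabel g₁).relabel g₂ = (χ.relabel g₂).relabel g₁ := by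
  show CStruct.mk χ.G χ.emb _ = CStruct.mk χ.G χ.emb _
  congr 1
  funext v
  exact h (χ.ι v)

lemma relabel_id {Λ : Type} (χ : CStruct V Λ) : χ.relabel id = χ := rfl

lemma restrict_diff_eq {Λ : Type} {g₁ g₂ : V ⊕ Λ → V ⊕ Λ} {σ ψ : CStruct V Λ}
    (hfix₂ : ∀ y : Λ, g₂ (Sum.inr y) = Sum.inr y) (h1 : IsRestrictionOf g₁ σ ψ) :
    σ.G.verts \ {v : V | ∃ y, VertRedundant (σ.relabel g₂) y v} =
      ψ.G.verts \ {v : V | ∃ y, VertRedundant ((ψ.relabel g₁).relabel g₂) y v} := by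
  ext v
  simp only [Set.mem_diff, Set.mem_setOf_eq]
  constructor
  · rintro ⟨hσ, hB⟩
    have hψv := res_verts_subset h1 hσ
    have hR1 := res_not_red h1 hσ
    exact ⟨hψv, fun hA => hB ((vertDel hfix₂ h1 hψv hR1).1 hA)⟩
  · rintro ⟨hψv, hA⟩
    have hR1 : ¬ ∃ y, VertRedundant (ψ.relabel g₁) y v :=
      fun h => hA (Exists.elim h (fun y hr => ⟨y, vertRed_mono hfix₂ hr⟩))
    exact ⟨res_mem_verts h1 hψv hR1, fun hB => hA ((vertDel hfix₂ h1 hψv hR1).2 hB)⟩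

lemma restrict_arcdiff_eq {Λ : Type} {g₁ g₂ : V ⊕ Λ → V ⊕ Λ} {σ ψ : CStruct V Λ}
    (hfix₂ : ∀ y : Λ, g₂ (Sum.inr y) = Sum.inr y) (h1 : IsRestrictionOf g₁ σ ψ)
    (u v : V) :
    (σ.G.Arc u v ∧ ¬ ∃ y, ArcRedundant (σ.relabel g₂) y u v) ↔
      (ψ.G.Arc u v ∧ ¬ ∃ y, ArcRedundant ((ψ.relabel g₁).relabel g₂) y u v) := by
  constructor
  · rintro ⟨hσ, hB⟩
    have h0 := (res_arc_iff h1).1 hσ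
    exact ⟨h0.1, fun hA => hB ((arcDel hfix₂ h1 h0.1 h0.2).1 hA)⟩
  · rintro ⟨hψa, hA⟩
    have hR1 : ¬ ∃ y, ArcRedundant (ψ.relabel g₁) y u v :=
      fun h => hA (Exists.elim h (fun y hr => ⟨y, arcRed_mono hfix₂ hr⟩))
    exact ⟨(res_arc_iff h1).2 ⟨hψa, hR1⟩,
      fun hB => hA ((arcDel hfix₂ h1 hψa hR1).2 hB)⟩

end Glue


section Parts
variable {V : Type}

lemma gz_fix (z : V) : ∀ y : Lab, sendVerts ({z} : Set V) Lab.future (Sum.inr y) = Sum.inr y :=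
  fun _ => rfl

lemma gP_fix (P : Set V) : ∀ y : Lab, sendVerts P Lab.past (Sum.inr y) = Sum.inr y :=
  fun _ => rfl

lemma id_fix : ∀ y : Lab, (id : V ⊕ Lab → V ⊕ Lab) (Sum.inr y) = Sum.inr y := fun _ => rfl

/-- Part A: the `(z→future)`-restriction of an `F`-partial solution is an
`F∪{z}`-partial solution. -/
lemma isPartialSolution_restrict (Din : DispGraph V) (P S : Set V) (z : V)
    (hz : z ∈ S) (hzP : z ∉ P) (ψ : CStruct V Lab)
    (hψPS : IsPartialSolution Din P S ψ) :
    IsPartialSolution Din P (S \ {z}) (restrictCS ψ (sendVerts ({z} : Set V) Lab.future)) := by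
  set gz := sendVerts ({z} : Set V) Lab.future with hgz
  have hresψ' := restrictCS_isRestriction ψ gz
  obtain ⟨⟨c1, c2, c3, c4, c5⟩, cdeg, cout⟩ := hψPS
  have hsub : (restrictCS ψ gz).G.verts ⊆ ψ.G.verts := res_verts_subset hresψ'
  have hmemPS : ∀ s : V, s ∈ P ∪ (S \ {z}) → s ∈ P ∪ S ∧ s ≠ z := by
    rintro s (h | h)
    · exact ⟨Or.inl h, fun he => hzP (he ▸ h)⟩
    · exact ⟨Or.inr h.1, fun he => h.2 (he ▸ rfl)⟩
  have hgzne : ∀ s : V, s ≠ z → gz (Sum.inl s) = Sum.inl s := by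
    intro s hs
    exact sendVerts_not_mem (by simpa using hs)
  -- labels of `inl`-labelled vertices rule out redundancy of incident arcs
  have harcfix : ∀ (u : V) (s : V), ψ.ι u = Sum.inl s → s ≠ z →
      (∀ w, ¬ ∃ y, ArcRedundant (ψ.relabel gz) y w u) ∧
      (∀ w, ¬ ∃ y, ArcRedundant (ψ.relabel gz) y u w) := by
    intro u s hψι hne
    constructor <;> intro w h <;> obtain ⟨y, hr⟩ := h
    · have := (arcRed_labels hr).2
      rw [relabel_ι, hψι, hgzne s hne] at this
      exact Sum.inl_ne_inr this
    · have := (arcRed_labels hr).1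
      rw [relabel_ι, hψι, hgzne s hne] at this
      exact Sum.inl_ne_inr this
  refine ⟨⟨?_, ?_, ?_, ?_, ?_⟩, ?_, ?_⟩
  · -- c1
    intro u hu
    rcases c1 u (hsub hu) with ⟨s, hs, hιs⟩ | ⟨y, hy, hιy⟩
    · by_cases hsz : s = z
      · subst hsz
        refine Or.inr ⟨Lab.future, rfl, ?_⟩
        show gz (ψ.ι u) = _
        rw [hιs]
        exact sendVerts_mem rfl
      · refine Or.inl ⟨s, ?_, ?_⟩
        · rcases hs with h | h
          · exact Or.inl h
          · exact Or.inr ⟨h, hsz⟩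
        · show gz (ψ.ι u) = _
          rw [hιs]
          exact hgzne s hsz
    · refine Or.inr ⟨y, hy, ?_⟩
      show gz (ψ.ι u) = _
      rw [hιy]
      exact gz_fix z y
  · -- c2
    intro s hs
    obtain ⟨hs', hne⟩ := hmemPS s hs
    obtain ⟨u, hu, hιu⟩ := c2 s hs'
    have hι' : (restrictCS ψ gz).ι u = Sum.inl s := by
      show gz (ψ.ι u) = _
      rw [hιu]; exact hgzne s hne
    refine ⟨u, ?_, hι'⟩
    refine res_mem_verts hresψ' hu ?_
    rintro ⟨y, hr⟩
    have := vertRed_label hr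
    rw [relabel_ι, hιu, hgzne s hne] at this
    exact Sum.inl_ne_inr this
  · -- c3
    intro u hu s hs hι
    have hψι : ψ.ι u = Sum.inl s := sendVerts_eq_inl hι
    obtain ⟨hs', _⟩ := hmemPS s hs
    obtain ⟨hN, hT⟩ := c3 u (hsub hu) s hs' hψι
    constructor
    · intro h
      rw [hresψ'.2.2.2.1]
      exact ⟨hN h, hu⟩
    · intro h
      rw [hresψ'.2.2.1]
      exact ⟨hT h, hu⟩
  · -- c4
    intro u hu v hv s hs hιu hιv
    exact c4 u (hsub hu) v (hsub hv) s (hmemPS s hs).1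
      (sendVerts_eq_inl hιu) (sendVerts_eq_inl hιv)
  · -- c5
    intro u hu v hv s hs t ht hιu hιv
    have hψu : ψ.ι u = Sum.inl s := sendVerts_eq_inl hιu
    have hψv : ψ.ι v = Sum.inl t := sendVerts_eq_inl hιv
    have base := c5 u (hsub hu) v (hsub hv) s (hmemPS s hs).1 t (hmemPS t ht).1 hψu hψv
    constructor
    · intro h
      exact base.1 ((hresψ'.2.1 u v).1 h).1
    · intro h
      refine (hresψ'.2.1 u v).2 ⟨base.2 h, ?_⟩
      exact (harcfix u s hψu (hmemPS s hs).2).2 v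
  · -- degrees
    intro u hu s hs hι
    have hψι : ψ.ι u = Sum.inl s := sendVerts_eq_inl hι
    have hbase := cdeg u (hsub hu) s (hmemPS s hs).1 hψι
    have hfix := harcfix u s hψι (hmemPS s hs).2
    have hin : {w : V | (restrictCS ψ gz).G.Arc w u} = {w : V | ψ.G.Arc w u} := by
      ext w
      simp only [Set.mem_setOf_eq]
      exact ⟨fun hw => hw.1, fun hw => ⟨hw, hfix.1 w⟩⟩
    have hout : {w : V | (restrictCS ψ gz).G.Arc u w} = {w : V | ψ.G.Arc u w} := by
      ext w
      simp only [Set.mem_setOf_eq]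
      exact ⟨fun hw => hw.1, fun hw => ⟨hw, hfix.2 w⟩⟩
    constructor
    · show {w : V | (restrictCS ψ gz).G.Arc w u}.ncard = Din.inDeg s
      rw [hin]; exact hbase.1
    · show {w : V | (restrictCS ψ gz).G.Arc u w}.ncard = Din.outDeg s
      rw [hout]; exact hbase.2
  · -- out-degree 2 condition
    intro u hu hne
    have hu' : u ∈ ψ.G.VT ∧ u ∈ (restrictCS ψ gz).G.verts := by
      rw [hresψ'.2.2.1] at hu; exact hu
    have hne' : (ψ.relabel gz).ι u ≠ (ψ.relabel gz).ι (ψ.emb.vmap u) := hne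
    have hout : {w : V | (restrictCS ψ gz).G.Arc u w} = {w : V | ψ.G.Arc u w} := by
      ext w
      simp only [Set.mem_setOf_eq]
      refine ⟨fun hw => hw.1, fun hw => ⟨hw, ?_⟩⟩
      rintro ⟨y, hr | hr⟩
      · have hm : ψ.emb.vmap u ∈ ψ.emb.pmap u w := vmap_mem_pmap ψ hr.1
        exact hne' ((hr.2.1).trans (hr.2.2.2 _ hm).symm)
      · exact ψ.G.shared_out u ⟨hu'.1, hr.1.2.1⟩ w hr.1.1
    have hψne : ψ.ι u ≠ ψ.ι (ψ.emb.vmap u) := by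
      intro heq
      exact hne' (by show gz (ψ.ι u) = gz (ψ.ι (ψ.emb.vmap u)); rw [heq])
    have hbase := cout u hu'.1 hψne
    show {w : V | (restrictCS ψ gz).G.Arc u w}.ncard = 2
    rw [hout]; exact hbase

/-- Part B: the restriction of a well-behaved structure is well-behaved. -/
lemma wellBehaved_restrictCS (Din : DispGraph V) (ψ : CStruct V Lab)
    (g : V ⊕ Lab → V ⊕ Lab) (hg : ∀ (x : V ⊕ Lab) (s : V), g x = Sum.inl s → x = Sum.inl s)
    (hwb : WellBehaved Din ({Lab.future} : Set Lab) ψ) :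
    WellBehaved Din ({Lab.future} : Set Lab) (restrictCS ψ g) := by
  have hresψ' := restrictCS_isRestriction ψ g
  refine ⟨?_, ?_, ?_, ?_⟩
  · intro u v ha
    have ha' := (hresψ'.2.1 u v).1 ha
    rintro ⟨y, _, hr⟩
    have hAB := arcDel id_fix hresψ' ha'.1 ha'.2
    rw [relabel_id, relabel_id] at hAB
    exact ha'.2 (hAB.2 ⟨y, hr⟩)
  · intro v hv
    have hv' : v ∈ ψ.G.verts ∧ ¬ ∃ y, VertRedundant (ψ.relabel g) y v := by
      rw [hresψ'.1] at hv; exact hv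
    rintro ⟨y, _, hr⟩
    have hAB := vertDel id_fix hresψ' hv'.1 hv'.2
    rw [relabel_id, relabel_id] at hAB
    exact hv'.2 (hAB.2 ⟨y, hr⟩)
  · intro u v _ y hy y' hy' _ _
    rw [Set.mem_singleton_iff] at hy hy'
    rw [hy, hy']
  · intro u hu v hv s t hιu hιv hreach
    have hψu : ψ.ι u = Sum.inl s := hg _ _ hιu
    have hψv : ψ.ι v = Sum.inl t := hg _ _ hιv
    refine hwb.2.2.2 u (res_verts_subset hresψ' hu) v (res_verts_subset hresψ' hv)
      s t hψu hψv ?_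
    exact Relation.ReflTransGen.mono (fun a b h => ((hresψ'.2.1 a b).1 h).1) u v hreach

end Parts

/-- For an Introduce bag `(P,S,F)` with child `(P, S∖{z}, F∪{z})` and
`z ∈ S`: if a well-behaved signature `σ` for `(P,S,F)` is valid, then the
`(z→future)`-restriction of `σ` is a valid signature for the child bag. -/
theorem introduceBag_valid {V : Type} (Din : DispGraph V) (P S F : Set V) (z : V)
    (hz : z ∈ S) (hbag : IsBag Din P S F) (hbag' : IsBag Din P (S \ {z}) (F ∪ {z}))
    (σ : CStruct V Lab) (hsig : IsSignature Din S σ) (hwb : WellBehaved Din pfLabs σ)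
    (hvalid : ValidSig Din P S F σ)
    (σ' : CStruct V Lab)
    (hres : IsRestrictionOf (sendVerts ({z} : Set V) Lab.future) σ' σ) :
    ValidSig Din P (S \ {z}) (F ∪ {z}) σ' := by
  obtain ⟨ψ, hψPS, hψwb, hψres⟩ := hvalid
  have hzP : z ∉ P := fun h => Set.disjoint_left.1 hbag.2.1 h hz
  have hresψ' := restrictCS_isRestriction ψ (sendVerts ({z} : Set V) Lab.future)
  have hAeq : (ψ.relabel (sendVerts P Lab.past)).relabel (sendVerts ({z} : Set V) Lab.future)
      = (ψ.relabel (sendVerts ({z} : Set V) Lab.future)).relabel (sendVerts P Lab.past) :=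
    relabel_comm ψ (sendVerts_comm hzP)
  have hsub1 : σ'.G.verts ⊆ σ.G.verts := res_verts_subset hres
  have e1 : σ'.G.verts =
      (restrictCS ψ (sendVerts ({z} : Set V) Lab.future)).G.verts \
        {v : V | ∃ y, VertRedundant
          ((restrictCS ψ (sendVerts ({z} : Set V) Lab.future)).relabel
            (sendVerts P Lab.past)) y v} := by
    rw [hres.1, restrict_diff_eq (gz_fix z) hψres, hAeq,
      ← restrict_diff_eq (gP_fix P) hresψ']
  have hsub2 : σ'.G.verts ⊆ (restrictCS ψ (sendVerts ({z} : Set V) Lab.future)).G.verts := by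
    rw [e1]; exact Set.diff_subset
  refine ⟨restrictCS ψ (sendVerts ({z} : Set V) Lab.future),
    isPartialSolution_restrict Din P S z hz hzP ψ hψPS,
    wellBehaved_restrictCS Din ψ _ (fun x s h => sendVerts_eq_inl h) hψwb,
    e1, ?_, ?_, ?_, ?_, ?_, ?_⟩
  · -- arcs
    intro u v
    rw [hres.2.1 u v, restrict_arcdiff_eq (gz_fix z) hψres u v, hAeq,
      ← restrict_arcdiff_eq (gP_fix P) hresψ' u v]
  · -- VT
    ext v
    constructor
    · intro hv
      have h0 : v ∈ σ.G.VT ∧ v ∈ σ'.G.verts := by rw [hres.2.2.1] at hv; exact hv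
      have h1 : v ∈ ψ.G.VT ∧ v ∈ σ.G.verts := by
        have := h0.1; rwa [hψres.2.2.1] at this
      refine ⟨?_, h0.2⟩
      rw [hresψ'.2.2.1]
      exact ⟨h1.1, hsub2 h0.2⟩
    · rintro ⟨hv1, hv2⟩
      have h1 : v ∈ ψ.G.VT ∧
          v ∈ (restrictCS ψ (sendVerts ({z} : Set V) Lab.future)).G.verts := by
        rwa [hresψ'.2.2.1] at hv1
      rw [hres.2.2.1]
      refine ⟨?_, hv2⟩
      rw [hψres.2.2.1]
      exact ⟨h1.1, hsub1 hv2⟩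
  · -- VN
    ext v
    constructor
    · intro hv
      have h0 : v ∈ σ.G.VN ∧ v ∈ σ'.G.verts := by rw [hres.2.2.2.1] at hv; exact hv
      have h1 : v ∈ ψ.G.VN ∧ v ∈ σ.G.verts := by
        have := h0.1; rwa [hψres.2.2.2.1] at this
      refine ⟨?_, h0.2⟩
      rw [hresψ'.2.2.2.1]
      exact ⟨h1.1, hsub2 h0.2⟩
    · rintro ⟨hv1, hv2⟩
      have h1 : v ∈ ψ.G.VN ∧
          v ∈ (restrictCS ψ (sendVerts ({z} : Set V) Lab.future)).G.verts := by
        rwa [hresψ'.2.2.2.1] at hv1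
      rw [hres.2.2.2.1]
      refine ⟨?_, hv2⟩
      rw [hψres.2.2.2.1]
      exact ⟨h1.1, hsub1 hv2⟩
  · -- vmap
    intro v hv
    have hv0 := hv
    have h0 : v ∈ σ.G.VT ∧ v ∈ σ'.G.verts := by rw [hres.2.2.1] at hv0; exact hv0
    rw [hres.2.2.2.2.1 v hv, hψres.2.2.2.2.1 v h0.1]
    rfl
  · -- pmap
    intro u v ht
    have ht1 : σ.G.TArc u v := ((res_tarc_iff hres).1 ht).1
    rw [hres.2.2.2.2.2.1 u v ht, hψres.2.2.2.2.2.1 u v ht1]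
    rfl
  · -- labels
    intro v hv
    rw [hres.2.2.2.2.2.2 v hv, hψres.2.2.2.2.2.2 v (hsub1 hv)]
    exact sendVerts_comm hzP (ψ.ι v)

end TreeContainment
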